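/- arXiv:2509.03468 — 2 statements merged into one kernel-verified Lean document; each statement's English description precedes it below -/
import Mathlib

section
/- Let ρ₁ : ℝⁿ \ {0} → [0,∞) be a radial integrable function with support in the closed unit ball and radial representative ρ̄₁ : (0,∞) → [0,∞) (i.e. ρ₁(x) = ρ̄₁(|x|)) satisfying ∫_{ℝⁿ} ρ₁(z) dz = n. Then the function Q_{ρ₁} : ℝⁿ \ {0} → [0,∞) defined by Q_{ρ₁}(z) := ∫_{|z|}^{1} ρ̄₁(r)/r dr for 0 < |z| < 1 and Q_{ρ₁}(z) := 0 for |z| ≥ 1 is integrable on ℝⁿ with ‖Q_{ρ₁}‖_{L¹(ℝⁿ)} = 1, and its support is contained in the closed unit ball. -/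
/-!
For `z ≠ 0`, polar coordinates give `n |B₁| Q(z) = ∫_{|x| ≥ |z|} ρ₁(x) |x|⁻ⁿ dx`. Integrating over
`z` and exchanging the order of integration, the inner integral over `{z | |z| ≤ |x|}` is
`|B₁| |x|ⁿ`, so `n |B₁| ∫ Q = |B₁| ∫ ρ₁ = n |B₁|`. The tail integral is antitone in `|z|`, which
gives the measurability of `Q` for free.
-/

open MeasureTheory Metric Set Real Module
open scoped Classical ENNReal

noncomputable section

section NormTail

variable {E : Type*} [NormedAddCommGroup E] [NormedSpace ℝ E] [MeasurableSpace E]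
  (μ : Measure E)

def normTail (f : E → ℝ) (t : ℝ) : ℝ≥0∞ :=
  ∫⁻ x in {x | t ≤ ‖x‖}, ENNReal.ofReal (f x / ‖x‖ ^ finrank ℝ E) ∂μ

theorem antitone_normTail (f : E → ℝ) : Antitone (normTail μ f) :=
  fun _ _ hst => lintegral_mono_set fun _ hx => hst.trans hx

variable [BorelSpace E]

theorem toReal_normTail {f : E → ℝ} (hf₀ : 0 ≤ f) (hf : AEStronglyMeasurable f μ) (t : ℝ) :
    (normTail μ f t).toReal = ∫ x in {x | t ≤ ‖x‖}, f x / ‖x‖ ^ finrank ℝ E ∂μ := by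
  rw [integral_eq_lintegral_of_nonneg_ae, normTail]
  · exact ae_of_all _ fun x => div_nonneg (hf₀ x) (by positivity)
  · exact (hf.aemeasurable.div (measurable_norm.pow_const _).aemeasurable).aestronglyMeasurable
      |>.restrict

variable [Nontrivial E] [FiniteDimensional ℝ E] [μ.IsAddHaarMeasure]

theorem lintegral_normTail_norm {f : E → ℝ} (hf : AEMeasurable f μ) :
    ∫⁻ z, normTail μ f ‖z‖ ∂μ = μ (ball 0 1) * ∫⁻ x, ENNReal.ofReal (f x) ∂μ := by
  set d := finrank ℝ E
  set F : E → ℝ≥0∞ := fun x => ENNReal.ofReal (f x / ‖x‖ ^ d)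
  have hF : AEMeasurable (Function.uncurry fun z x : E => {x : E | ‖z‖ ≤ ‖x‖}.indicator F x)
      (μ.prod μ) := by
    have hset : MeasurableSet {p : E × E | ‖p.1‖ ≤ ‖p.2‖} :=
      measurableSet_le (measurable_norm.comp measurable_fst) (measurable_norm.comp measurable_snd)
    have hF' : AEMeasurable F μ := ENNReal.measurable_ofReal.comp_aemeasurable
      (hf.div (measurable_norm.pow_const d).aemeasurable)
    exact hF'.comp_snd.indicator hset
  have hball (x : E) (hx : x ≠ 0) :
      ∫⁻ z, (closedBall 0 ‖x‖).indicator (fun _ => F x) z ∂μ =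
        ENNReal.ofReal (f x) * μ (ball 0 1) := by
    rw [lintegral_indicator_const measurableSet_closedBall,
      Measure.addHaar_closedBall μ 0 (norm_nonneg x), ← mul_assoc,
      ← ENNReal.ofReal_mul' (by positivity),
      div_mul_cancel₀ _ (pow_ne_zero _ (norm_ne_zero_iff.2 hx))]
  calc ∫⁻ z, normTail μ f ‖z‖ ∂μ
      = ∫⁻ z, ∫⁻ x, {x : E | ‖z‖ ≤ ‖x‖}.indicator F x ∂μ ∂μ := by
        simp_rw [normTail, ← lintegral_indicator (measurableSet_le measurable_const measurable_norm)]
        rfl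
    _ = ∫⁻ x, ∫⁻ z, (closedBall 0 ‖x‖).indicator (fun _ => F x) z ∂μ ∂μ := by
        rw [lintegral_lintegral_swap hF]
        refine lintegral_congr fun x => lintegral_congr fun z => ?_
        by_cases h : ‖z‖ ≤ ‖x‖ <;> simp [indicator, h]
    _ = ∫⁻ x, ENNReal.ofReal (f x) * μ (ball 0 1) ∂μ :=
        lintegral_congr_ae ((μ.ae_ne 0).mono hball)
    _ = μ (ball 0 1) * ∫⁻ x, ENNReal.ofReal (f x) ∂μ := by
        rw [lintegral_mul_const' _ _ measure_ball_lt_top.ne, mul_comm]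

theorem setIntegral_norm_ge_div_pow_of_radial {f : E → ℝ} {g : ℝ → ℝ}
    (hfg : ∀ x, x ≠ 0 → f x = g ‖x‖) (hf : Function.support f ⊆ closedBall 0 1) {t : ℝ}
    (ht : 0 < t) :
    ∫ x in {x | t ≤ ‖x‖}, f x / ‖x‖ ^ finrank ℝ E ∂μ =
      finrank ℝ E * μ.real (ball 0 1) * ∫ s in Icc t 1, g s / s := by
  set d := finrank ℝ E
  have hradial : {x : E | t ≤ ‖x‖}.indicator (fun x => f x / ‖x‖ ^ d) =ᵐ[μ]
      fun x => (Icc t 1).indicator (fun s => g s / s ^ d) ‖x‖ := by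
    filter_upwards [μ.ae_ne 0] with x hx
    by_cases h₁ : ‖x‖ ≤ 1
    · by_cases ht' : t ≤ ‖x‖ <;> simp [indicator, hfg x hx, h₁, ht']
    · have : f x = 0 := Function.notMem_support.1 fun h => h₁ (by simpa using hf h)
      simp [indicator, this, h₁]
  have hpow : ∀ s ∈ Ioi (0 : ℝ), s ^ (d - 1) • (Icc t 1).indicator (fun s => g s / s ^ d) s =
      (Icc t 1).indicator (fun s => g s / s) s := by
    intro s (hs : 0 < s)
    have hd : s ^ d = s ^ (d - 1) * s := by rw [← pow_succ, Nat.sub_add_cancel finrank_pos]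
    by_cases h : s ∈ Icc t 1
    · simp only [indicator_of_mem h, smul_eq_mul, hd]
      field_simp
    · simp [h]
  have hIcc : Icc t 1 ⊆ Ioi (0 : ℝ) := fun s hs => ht.trans_le hs.1
  rw [← integral_indicator (measurableSet_le measurable_const measurable_norm),
    integral_congr_ae hradial, integral_fun_norm_addHaar, nsmul_eq_mul, smul_eq_mul, mul_assoc,
    setIntegral_congr_fun measurableSet_Ioi hpow, setIntegral_indicator measurableSet_Icc,
    inter_eq_right.2 hIcc]

end NormTail

theorem ite_intervalIntegral_eq_setIntegral_Icc (g : ℝ → ℝ) (t b : ℝ) :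
    (if t < b then ∫ s in t..b, g s else 0) = ∫ s in Icc t b, g s := by
  split_ifs with h
  · rw [intervalIntegral.integral_of_le h.le, integral_Icc_eq_integral_Ioc]
  · rw [setIntegral_measure_zero _ (by simpa [Real.volume_Icc] using h)]

theorem integrable_and_integral_abs_of_ae_eq_toReal {α : Type*} [MeasurableSpace α]
    {μ : Measure α} {f : α → ℝ} {G : α → ℝ≥0∞} (hG : AEMeasurable G μ)
    (hG_fin : ∫⁻ x, G x ∂μ ≠ ⊤) (hfG : f =ᵐ[μ] fun x => (G x).toReal) :
    Integrable f μ ∧ ∫ x, |f x| ∂μ = (∫⁻ x, G x ∂μ).toReal := by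
  refine ⟨(integrable_toReal_of_lintegral_ne_top hG hG_fin).congr hfG.symm, ?_⟩
  calc ∫ x, |f x| ∂μ = ∫ x, (G x).toReal ∂μ :=
        integral_congr_ae (hfG.mono fun x hx => by
          simp only [hx, abs_of_nonneg ENNReal.toReal_nonneg])
    _ = (∫⁻ x, G x ∂μ).toReal := integral_toReal hG (ae_lt_top' hG hG_fin)

theorem stmt_8_general {n : ℕ} (hn : 0 < n)
    (ρ₁ : EuclideanSpace ℝ (Fin n) → ℝ) (ρbar : ℝ → ℝ)
    (hρ_nonneg : ∀ z, 0 ≤ ρ₁ z)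
    (hρ_int : Integrable ρ₁)
    (hρ_supp : Function.support ρ₁ ⊆ Metric.closedBall 0 1)
    (hradial : ∀ z : EuclideanSpace ℝ (Fin n), z ≠ 0 → ρ₁ z = ρbar ‖z‖)
    (hnorm : ∫ z, ρ₁ z = (n : ℝ))
    (Q : EuclideanSpace ℝ (Fin n) → ℝ)
    (hQ : Q = fun z => if ‖z‖ < 1 then ∫ r in ‖z‖..1, ρbar r / r else 0) :
    Integrable Q ∧ (∫ z, |Q z|) = 1 ∧ Function.support Q ⊆ Metric.closedBall 0 1 := by
  have : Nonempty (Fin n) := ⟨⟨0, hn⟩⟩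
  have hQ_Icc (z) : Q z = ∫ s in Icc ‖z‖ 1, ρbar s / s :=
    (congrFun hQ z).trans (ite_intervalIntegral_eq_setIntegral_Icc _ _ _)
  set B := volume (ball (0 : EuclideanSpace ℝ (Fin n)) 1)
  have hnB₀ : (n * B : ℝ≥0∞) ≠ 0 :=
    mul_ne_zero (by simpa using hn.ne') (measure_ball_pos _ _ one_pos).ne'
  have hnB_top : (n * B : ℝ≥0∞) ≠ ⊤ :=
    ENNReal.mul_ne_top (ENNReal.natCast_ne_top n) measure_ball_lt_top.ne
  have hT_meas : Measurable fun z : EuclideanSpace ℝ (Fin n) => normTail volume ρ₁ ‖z‖ :=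
    (antitone_normTail volume ρ₁).measurable.comp measurable_norm
  set G : EuclideanSpace ℝ (Fin n) → ℝ≥0∞ := fun z => (n * B)⁻¹ * normTail volume ρ₁ ‖z‖
  have hG_lintegral : ∫⁻ z, G z = 1 := by
    rw [lintegral_const_mul _ hT_meas, lintegral_normTail_norm volume hρ_int.aemeasurable,
      ← ofReal_integral_eq_lintegral_ofReal hρ_int (ae_of_all _ hρ_nonneg), hnorm,
      ENNReal.ofReal_natCast, mul_comm B, ENNReal.inv_mul_cancel hnB₀ hnB_top]
  have hQG : Q =ᵐ[volume] fun z => (G z).toReal := by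
    filter_upwards [volume.ae_ne 0] with z hz
    rw [ENNReal.toReal_mul, toReal_normTail volume hρ_nonneg hρ_int.aestronglyMeasurable,
      setIntegral_norm_ge_div_pow_of_radial volume hradial hρ_supp (norm_pos_iff.2 hz),
      finrank_euclideanSpace_fin, hQ_Icc, ← mul_assoc, ENNReal.toReal_inv,
      ← ENNReal.toReal_natCast, measureReal_def, ← ENNReal.toReal_mul,
      inv_mul_cancel₀ (ENNReal.toReal_ne_zero.2 ⟨hnB₀, hnB_top⟩), one_mul]
  obtain ⟨hQ_int, hQ_abs⟩ := integrable_and_integral_abs_of_ae_eq_toReal (G := G)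
    (hT_meas.const_mul _).aemeasurable (hG_lintegral ▸ ENNReal.one_ne_top) hQG
  refine ⟨hQ_int, by rw [hQ_abs, hG_lintegral, ENNReal.toReal_one], fun z hz => ?_⟩
  rw [mem_closedBall_zero_iff]
  by_contra hz₁
  exact hz (by simp [hQ, (not_le.1 hz₁).not_gt])

/-- The potential `Q_{ρ₁}(z) = ∫_{|z|}^1 ρ̄₁(r)/r dr` (set to `0` for `|z| ≥ 1`) associated with a
radial integrable kernel `ρ₁` supported in the closed unit ball and normalized by
`∫ ρ₁ = n` is integrable on `ℝⁿ` with `‖Q_{ρ₁}‖_{L¹} = 1`, and is supported in the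
closed unit ball. -/
theorem stmt_8 {n : ℕ} (hn : 0 < n)
    (ρ₁ : EuclideanSpace ℝ (Fin n) → ℝ) (ρbar : ℝ → ℝ)
    (hρ_nonneg : ∀ z, 0 ≤ ρ₁ z) (hρbar_nonneg : ∀ r, 0 < r → 0 ≤ ρbar r)
    (hρ_int : Integrable ρ₁)
    (hρ_supp : Function.support ρ₁ ⊆ Metric.closedBall 0 1)
    (hradial : ∀ z : EuclideanSpace ℝ (Fin n), z ≠ 0 → ρ₁ z = ρbar ‖z‖)
    (hnorm : ∫ z, ρ₁ z = (n : ℝ))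
    (Q : EuclideanSpace ℝ (Fin n) → ℝ)
    (hQ : Q = fun z => if ‖z‖ < 1 then ∫ r in ‖z‖..1, ρbar r / r else 0) :
    Integrable Q ∧ (∫ z, |Q z|) = 1 ∧ Function.support Q ⊆ Metric.closedBall 0 1 :=
  stmt_8_general hn ρ₁ ρbar hρ_nonneg hρ_int hρ_supp hradial hnorm Q hQ
end
end

section
/- Let μ ∈ (0,1), m' ∈ [μ−1, 0), and let a : ℝⁿ × ℝⁿ → ℂ be smooth with |a(x,ξ)| ≥ C₀ ⟨ξ⟩^{m'} for all x, ξ and |∂_x^β ∂_ξ^α a(x,ξ)| ≤ C_{α,β} ⟨ξ⟩^{−|α|+μ|β|} |a(x,ξ)| for all x, ξ and all multi-indices α, β. For ε ∈ (0,1) set a_ε(x,ξ) := a(x, εξ). Then for all multi-indices α, β with α ≠ 0 there is a constant C'_{α,β} > 0, independent of ε, such that |∂_x^β ∂_ξ^α (1/a_ε)(x,ξ)| ≤ C'_{α,β} · ε^{−m'} · ⟨ξ⟩^{−m'−|α|+μ|β|} for all x, ξ ∈ ℝⁿ and all ε ∈ (0,1). -/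
open MeasureTheory Metric Set Real

noncomputable section

/-- Partial derivative in coordinate direction `i`. -/
def pd {F : Type*} [NormedAddCommGroup F] [NormedSpace ℝ F] {n : ℕ} (i : Fin n)
    (f : EuclideanSpace ℝ (Fin n) → F) : EuclideanSpace ℝ (Fin n) → F :=
  fun x => fderiv ℝ f x (EuclideanSpace.single i 1)

/-- Iterated multi-index partial derivative `∂^α = ∂₁^{α₁} ∘ ⋯ ∘ ∂ₙ^{αₙ}`. -/
def pdM {F : Type*} [NormedAddCommGroup F] [NormedSpace ℝ F] {n : ℕ} (α : Fin n → ℕ)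
    (f : EuclideanSpace ℝ (Fin n) → F) : EuclideanSpace ℝ (Fin n) → F :=
  (List.ofFn fun i : Fin n => (pd i)^[α i]).foldr (· ∘ ·) id f

/-- `∂_ξ^α` applied to a symbol `a(x, ξ)` in the second variable. -/
def pdXi {F : Type*} [NormedAddCommGroup F] [NormedSpace ℝ F] {n : ℕ} (α : Fin n → ℕ)
    (q : EuclideanSpace ℝ (Fin n) → EuclideanSpace ℝ (Fin n) → F) :
    EuclideanSpace ℝ (Fin n) → EuclideanSpace ℝ (Fin n) → F :=
  fun x => pdM α (q x)

/-- `∂_x^β` applied to a symbol `a(x, ξ)` in the first variable. -/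
def pdX {F : Type*} [NormedAddCommGroup F] [NormedSpace ℝ F] {n : ℕ} (β : Fin n → ℕ)
    (q : EuclideanSpace ℝ (Fin n) → EuclideanSpace ℝ (Fin n) → F) :
    EuclideanSpace ℝ (Fin n) → EuclideanSpace ℝ (Fin n) → F :=
  fun x ξ => pdM β (fun x' => q x' ξ) x

/-- The Japanese bracket `⟨ξ⟩ = (1 + |ξ|²)^{1/2}`. -/
def jb {n : ℕ} (ξ : EuclideanSpace ℝ (Fin n)) : ℝ := Real.sqrt (1 + ‖ξ‖ ^ 2)

/-!
By `∂(1/a) = -a⁻² ∂a` and the Leibniz rule, the derivatives of `1/a` of order `N + 1` are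
controlled by those of order `N`, so `1/a` obeys the same relative estimates as `a` with `|a|`
replaced by `|a|⁻¹`; ellipticity turns `|a|⁻¹` into `C₀⁻¹ ⟨ξ⟩^{-m'}`, i.e. `1/a ∈ S^{-m'}_{1,μ}`.
Mixed partials commute for smooth functions, so these estimates hold for derivatives taken in
any order. For the rescaled symbol the chain rule gives
`∂_x^β ∂_ξ^α (1/a_ε)(x, ξ) = ε^{|α|} (∂_x^β ∂_ξ^α (1/a))(x, εξ)`, and the claim follows from
`ε^t ⟨εξ⟩^{-t} ≤ ⟨ξ⟩^{-t}` for `t = |α| + m' ≥ 0` together with `⟨εξ⟩ ≤ ⟨ξ⟩`.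
-/

open scoped ContDiff

section DirectionalDerivative

variable {E F : Type*} [NormedAddCommGroup E] [NormedSpace ℝ E]
  [NormedAddCommGroup F] [NormedSpace ℝ F] {f g : E → ℂ}

def dirDeriv (v : E) (f : E → ℂ) : E → ℂ := fun p => fderiv ℝ f p v

def iteratedDirDeriv (u : List E) (f : E → ℂ) : E → ℂ := u.foldr dirDeriv f

theorem ContDiff.dirDeriv (hf : ContDiff ℝ ∞ f) (v : E) : ContDiff ℝ ∞ (dirDeriv v f) :=
  (contDiff_infty_iff_fderiv.1 hf).2.clm_apply contDiff_const

theorem dirDeriv_smul_left (c : ℝ) (v : E) (f : E → ℂ) :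
    dirDeriv (c • v) f = c • dirDeriv v f := by
  funext p
  simp [dirDeriv]

theorem dirDeriv_add (hf : ContDiff ℝ ∞ f) (hg : ContDiff ℝ ∞ g) (v : E) :
    dirDeriv v (f + g) = dirDeriv v f + dirDeriv v g := by
  funext p
  simp [dirDeriv, fderiv_add (hf.differentiable (by simp) p) (hg.differentiable (by simp) p)]

theorem dirDeriv_const_smul (hf : ContDiff ℝ ∞ f) (c : ℝ) (v : E) :
    dirDeriv v (c • f) = c • dirDeriv v f := by
  funext p
  simp [dirDeriv, fderiv_const_smul (hf.differentiable (by simp) p)]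

theorem dirDeriv_mul (hf : ContDiff ℝ ∞ f) (hg : ContDiff ℝ ∞ g) (v : E) :
    dirDeriv v (f * g) = dirDeriv v f * g + f * dirDeriv v g := by
  funext p
  simp [dirDeriv, fderiv_mul (hf.differentiable (by simp) p) (hg.differentiable (by simp) p)]
  ring

theorem dirDeriv_inv (hf : ContDiff ℝ ∞ f) (h0 : ∀ p, f p ≠ 0) (v : E) :
    dirDeriv v f⁻¹ = -(f⁻¹ * f⁻¹ * dirDeriv v f) := by
  funext p
  have hinv : f⁻¹ = Inv.inv ∘ f := rfl
  rw [dirDeriv, hinv, fderiv_comp p (differentiableAt_inv (h0 p))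
    (hf.differentiable (by simp) p), fderiv_inv' (h0 p)]
  simp [dirDeriv, ContinuousLinearMap.mulLeftRight_apply]
  ring

theorem dirDeriv_comm (hf : ContDiff ℝ ∞ f) (v w : E) :
    dirDeriv v (dirDeriv w f) = dirDeriv w (dirDeriv v f) := by
  funext p
  have hdf := (contDiff_infty_iff_fderiv.1 hf).2
  have key (a b : E) : dirDeriv a (dirDeriv b f) p = fderiv ℝ (fderiv ℝ f) p a b := by
    change fderiv ℝ (fun y => fderiv ℝ f y b) p a = _
    rw [fderiv_clm_apply (hdf.differentiable (by simp) p) (differentiableAt_const b)]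
    simp
  rw [key, key, (hf.contDiffAt.isSymmSndFDerivAt (by simpa using ENat.LEInfty.out)).eq]

@[simp] theorem iteratedDirDeriv_nil (f : E → ℂ) : iteratedDirDeriv [] f = f := rfl

theorem iteratedDirDeriv_cons (v : E) (u : List E) (f : E → ℂ) :
    iteratedDirDeriv (v :: u) f = dirDeriv v (iteratedDirDeriv u f) := rfl

theorem ContDiff.iteratedDirDeriv (hf : ContDiff ℝ ∞ f) (u : List E) :
    ContDiff ℝ ∞ (iteratedDirDeriv u f) := by
  induction u with
  | nil => exact hf
  | cons v u ih => exact ih.dirDeriv v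

theorem iteratedDirDeriv_dirDeriv_comm (hf : ContDiff ℝ ∞ f) (v : E) (u : List E) :
    iteratedDirDeriv u (dirDeriv v f) = dirDeriv v (iteratedDirDeriv u f) := by
  induction u with
  | nil => rfl
  | cons w u ih =>
    rw [iteratedDirDeriv_cons, ih, iteratedDirDeriv_cons, dirDeriv_comm (hf.iteratedDirDeriv u)]

theorem iteratedDirDeriv_cons' (hf : ContDiff ℝ ∞ f) (v : E) (u : List E) :
    iteratedDirDeriv (v :: u) f = iteratedDirDeriv u (dirDeriv v f) :=
  (iteratedDirDeriv_dirDeriv_comm hf v u).symm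

theorem iteratedDirDeriv_append (u v : List E) (f : E → ℂ) :
    iteratedDirDeriv (u ++ v) f = iteratedDirDeriv u (iteratedDirDeriv v f) :=
  List.foldr_append

theorem iteratedDirDeriv_perm (hf : ContDiff ℝ ∞ f) {u v : List E} (h : u.Perm v) :
    iteratedDirDeriv u f = iteratedDirDeriv v f := by
  induction h with
  | nil => rfl
  | cons w _ ih => rw [iteratedDirDeriv_cons, ih, iteratedDirDeriv_cons]
  | swap w w' u => exact dirDeriv_comm (hf.iteratedDirDeriv u) w' w
  | trans _ _ ih ih' => rw [ih, ih']

theorem iteratedDirDeriv_add (hf : ContDiff ℝ ∞ f) (hg : ContDiff ℝ ∞ g) (u : List E) :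
    iteratedDirDeriv u (f + g) = iteratedDirDeriv u f + iteratedDirDeriv u g := by
  induction u with
  | nil => rfl
  | cons v u ih =>
    rw [iteratedDirDeriv_cons, ih, dirDeriv_add (hf.iteratedDirDeriv u) (hg.iteratedDirDeriv u)]
    rfl

theorem iteratedDirDeriv_neg (u : List E) (f : E → ℂ) :
    iteratedDirDeriv u (-f) = -iteratedDirDeriv u f := by
  induction u with
  | nil => rfl
  | cons v u ih =>
    funext p
    rw [iteratedDirDeriv_cons, ih]
    simp [dirDeriv, iteratedDirDeriv_cons, Pi.neg_def]

theorem iteratedDirDeriv_map_smul {ι : Type*} (hf : ContDiff ℝ ∞ f) (c : ι → ℝ) (v : ι → E)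
    (u : List ι) :
    iteratedDirDeriv (u.map fun i => c i • v i) f =
      (u.map c).prod • iteratedDirDeriv (u.map v) f := by
  induction u with
  | nil => simp
  | cons i u ih =>
    simp only [List.map_cons, iteratedDirDeriv_cons, ih, List.prod_cons, dirDeriv_smul_left,
      dirDeriv_const_smul (hf.iteratedDirDeriv _), mul_smul, smul_comm (c i)]


theorem dirDeriv_comp_of_hasFDerivAt {f : F → ℂ} {φ : E → F} {L : E →L[ℝ] F}
    (hf : ContDiff ℝ ∞ f) (hφ : ∀ p, HasFDerivAt φ L p) (v : E) :
    dirDeriv v (f ∘ φ) = dirDeriv (L v) f ∘ φ := by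
  funext p
  simp [dirDeriv, ((hf.differentiable (by simp) (φ p)).hasFDerivAt.comp p (hφ p)).fderiv]

theorem iteratedDirDeriv_comp_of_hasFDerivAt {f : F → ℂ} {φ : E → F} {L : E →L[ℝ] F}
    (hf : ContDiff ℝ ∞ f) (hφ : ∀ p, HasFDerivAt φ L p) (u : List E) :
    iteratedDirDeriv u (f ∘ φ) = iteratedDirDeriv (u.map L) f ∘ φ := by
  induction u with
  | nil => rfl
  | cons v u ih =>
    rw [iteratedDirDeriv_cons, ih, dirDeriv_comp_of_hasFDerivAt (hf.iteratedDirDeriv _) hφ]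
    rfl

end DirectionalDerivative

section PhaseSpace

open Asymptotics

variable {n : ℕ}

local notation "ℝⁿ" => EuclideanSpace ℝ (Fin n)

def multiIndexWord (α : Fin n → ℕ) : List (Fin n) :=
  (List.ofFn fun i => List.replicate (α i) i).flatten

theorem foldr_replicate_eq_iterate {α β : Type*} (f : α → β → β) (a : α) (k : ℕ) (b : β) :
    (List.replicate k a).foldr f b = (f a)^[k] b := by
  induction k with
  | zero => rfl
  | succ k ih => rw [List.replicate_succ, List.foldr_cons, ih, Function.iterate_succ_apply']

theorem pdM_eq_foldr {F : Type*} [NormedAddCommGroup F] [NormedSpace ℝ F] (α : Fin n → ℕ)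
    (f : ℝⁿ → F) : pdM α f = (multiIndexWord α).foldr pd f := by
  rw [pdM, multiIndexWord, List.foldr_flatten, List.ofFn_eq_map, List.ofFn_eq_map]
  induction List.finRange n with
  | nil => rfl
  | cons i l ih => simp [ih, foldr_replicate_eq_iterate]

@[to_additive]
theorem prod_map_multiIndexWord {M : Type*} [CommMonoid M] (α : Fin n → ℕ) (g : Fin n → M) :
    ((multiIndexWord α).map g).prod = ∏ i, g i ^ α i := by
  simp [multiIndexWord, List.prod_flatten, List.prod_ofFn]

theorem count_multiIndexWord (α : Fin n → ℕ) (j : Fin n) : (multiIndexWord α).count j = α j := by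
  simp [multiIndexWord, List.count_flatten, Function.comp_def, List.count_replicate, List.sum_ofFn]

theorem foldr_pd_eq_iteratedDirDeriv (l : List (Fin n)) (f : ℝⁿ → ℂ) :
    l.foldr pd f = iteratedDirDeriv (l.map fun i => EuclideanSpace.single i 1) f := by
  induction l with
  | nil => rfl
  | cons i l ih => rw [List.foldr_cons, ih]; rfl

def coordDir : Fin n ⊕ Fin n → ℝⁿ × ℝⁿ
  | .inl i => (EuclideanSpace.single i 1, 0)
  | .inr i => (0, EuclideanSpace.single i 1)

def mixedWord (α β : Fin n → ℕ) : List (Fin n ⊕ Fin n) :=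
  (multiIndexWord β).map .inl ++ (multiIndexWord α).map .inr

theorem pdX_pdXi_eq_iteratedDirDeriv {q : ℝⁿ → ℝⁿ → ℂ}
    (hq : ContDiff ℝ ∞ fun p : ℝⁿ × ℝⁿ => q p.1 p.2) (α β : Fin n → ℕ) (x ξ : ℝⁿ) :
    pdX β (pdXi α q) x ξ =
      iteratedDirDeriv ((mixedWord α β).map coordDir) (fun p => q p.1 p.2) (x, ξ) := by
  have hξ : ∀ x', pdXi α q x' = fun ξ' => iteratedDirDeriv
      ((multiIndexWord α).map (coordDir ∘ .inr)) (fun p => q p.1 p.2) (x', ξ') := by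
    intro x'
    rw [pdXi, pdM_eq_foldr, foldr_pd_eq_iteratedDirDeriv]
    have := iteratedDirDeriv_comp_of_hasFDerivAt hq (hasFDerivAt_prodMk_right x')
      ((multiIndexWord α).map fun i => EuclideanSpace.single i 1)
    simpa [Function.comp_def, coordDir] using this
  rw [pdX, pdM_eq_foldr, foldr_pd_eq_iteratedDirDeriv]
  have := iteratedDirDeriv_comp_of_hasFDerivAt ((hq.iteratedDirDeriv
      ((multiIndexWord α).map (coordDir ∘ .inr)))) (hasFDerivAt_prodMk_left (F := ℝⁿ) · ξ)
      ((multiIndexWord β).map fun i => EuclideanSpace.single i 1)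
  simp only [hξ]
  simpa [Function.comp_def, coordDir, mixedWord, iteratedDirDeriv_append] using congrFun this x

@[to_additive]
theorem prod_map_mixedWord {M : Type*} [CommMonoid M] (α β : Fin n → ℕ)
    (g : Fin n ⊕ Fin n → M) :
    ((mixedWord α β).map g).prod = (∏ i, g (.inl i) ^ β i) * ∏ i, g (.inr i) ^ α i := by
  simp [mixedWord, prod_map_multiIndexWord]

theorem perm_mixedWord_count (u : List (Fin n ⊕ Fin n)) :
    u.Perm (mixedWord (fun i => Multiset.count (Sum.inr i) (u : Multiset (Fin n ⊕ Fin n)))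
      fun i => Multiset.count (Sum.inl i) (u : Multiset (Fin n ⊕ Fin n))) := by
  refine Multiset.coe_eq_coe.1 (Multiset.ext.2 fun o => ?_)
  simp only [Multiset.coe_count]
  cases o <;> simp [mixedWord, List.count_map_of_injective _ _ Sum.inl_injective,
    List.count_map_of_injective _ _ Sum.inr_injective, count_multiIndexWord, List.count_eq_zero]

theorem jb_pos (ξ : ℝⁿ) : 0 < jb ξ := Real.sqrt_pos.2 (by positivity)

def coordOrder (μ : ℝ) : Fin n ⊕ Fin n → ℝ := Sum.elim (fun _ => μ) fun _ => -1

theorem sum_map_coordOrder_mixedWord (μ : ℝ) (α β : Fin n → ℕ) :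
    ((mixedWord α β).map (coordOrder μ)).sum =
      -((∑ i, α i : ℕ) : ℝ) + μ * ((∑ i, β i : ℕ) : ℝ) := by
  simp [sum_map_mixedWord, coordOrder, Finset.mul_sum, mul_comm]
  ring

def symbolWeight (A : ℝⁿ × ℝⁿ → ℂ) (w : ℝ) (k : ℤ) (p : ℝⁿ × ℝⁿ) : ℝ :=
  jb p.2 ^ w * ‖A p‖ ^ k

theorem norm_symbolWeight (A : ℝⁿ × ℝⁿ → ℂ) (w : ℝ) (k : ℤ) (p : ℝⁿ × ℝⁿ) :
    ‖symbolWeight A w k p‖ = symbolWeight A w k p :=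
  Real.norm_of_nonneg (by unfold symbolWeight; have := jb_pos p.2; positivity)

theorem symbolWeight_mul {A : ℝⁿ × ℝⁿ → ℂ} (hA : ∀ p, A p ≠ 0) (w₁ w₂ : ℝ) (k₁ k₂ : ℤ)
    (p : ℝⁿ × ℝⁿ) :
    symbolWeight A w₁ k₁ p * symbolWeight A w₂ k₂ p = symbolWeight A (w₁ + w₂) (k₁ + k₂) p := by
  simp only [symbolWeight, Real.rpow_add (jb_pos p.2), zpow_add₀ (norm_ne_zero_iff.2 (hA p))]
  ring

/-- `g` is smooth and its derivatives of order `≤ N` obey the estimates of `S^w_{1,μ}` relative to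
`|A|^k`: `∂_x^β ∂_ξ^α g = O(⟨ξ⟩^{w - |α| + μ|β|} |A|^k)`. -/
def HasSymbolBounds (μ : ℝ) (A : ℝⁿ × ℝⁿ → ℂ) (w : ℝ) (k : ℤ) (N : ℕ) (g : ℝⁿ × ℝⁿ → ℂ) :
    Prop :=
  ContDiff ℝ ∞ g ∧ ∀ u : List (Fin n ⊕ Fin n), u.length ≤ N →
    iteratedDirDeriv (u.map coordDir) g =O[⊤] symbolWeight A (w + (u.map (coordOrder μ)).sum) k

variable {μ : ℝ} {A f g : EuclideanSpace ℝ (Fin n) × EuclideanSpace ℝ (Fin n) → ℂ}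
  {w w₁ w₂ : ℝ} {k k₁ k₂ : ℤ} {N : ℕ}

theorem HasSymbolBounds.contDiff (hg : HasSymbolBounds μ A w k N g) : ContDiff ℝ ∞ g := hg.1

theorem HasSymbolBounds.mono {M : ℕ} (hg : HasSymbolBounds μ A w k N g) (hMN : M ≤ N) :
    HasSymbolBounds μ A w k M g :=
  ⟨hg.1, fun u hu => hg.2 u (hu.trans hMN)⟩

theorem hasSymbolBounds_zero_iff :
    HasSymbolBounds μ A w k 0 g ↔ ContDiff ℝ ∞ g ∧ g =O[⊤] symbolWeight A w k := by
  refine ⟨fun hg => ⟨hg.1, by simpa using hg.2 [] le_rfl⟩, fun hg => ⟨hg.1, fun u hu => ?_⟩⟩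
  simpa [List.length_eq_zero_iff.1 (Nat.le_zero.1 hu)] using hg.2

theorem hasSymbolBounds_succ_iff :
    HasSymbolBounds μ A w k (N + 1) g ↔ HasSymbolBounds μ A w k 0 g ∧
      ∀ o, HasSymbolBounds μ A (w + coordOrder μ o) k N (dirDeriv (coordDir o) g) := by
  refine ⟨fun hg => ⟨hg.mono (Nat.zero_le _), fun o => ?_⟩, fun hg => ?_⟩
  · refine ⟨hg.1.dirDeriv _, fun v hv => ?_⟩
    have := hg.2 (o :: v) (by simpa using hv)
    rwa [List.map_cons, iteratedDirDeriv_cons' hg.1, List.map_cons, List.sum_cons,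
      ← add_assoc] at this
  · refine ⟨hg.1.1, fun u hu => ?_⟩
    cases u with
    | nil => exact hg.1.2 [] le_rfl
    | cons o v =>
      have := (hg.2 o).2 v (by simpa using hu)
      rwa [List.map_cons, iteratedDirDeriv_cons' hg.1.1, List.map_cons, List.sum_cons,
        ← add_assoc]

theorem HasSymbolBounds.add (hf : HasSymbolBounds μ A w k N f)
    (hg : HasSymbolBounds μ A w k N g) : HasSymbolBounds μ A w k N (f + g) := by
  refine ⟨hf.1.add hg.1, fun u hu => ?_⟩
  rw [iteratedDirDeriv_add hf.1 hg.1]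
  exact (hf.2 u hu).add (hg.2 u hu)

theorem HasSymbolBounds.neg (hg : HasSymbolBounds μ A w k N g) :
    HasSymbolBounds μ A w k N (-g) := by
  refine ⟨hg.1.neg, fun u hu => ?_⟩
  rw [iteratedDirDeriv_neg]
  exact (hg.2 u hu).neg_left

theorem HasSymbolBounds.mul (hA : ∀ p, A p ≠ 0) (hf : HasSymbolBounds μ A w₁ k₁ N f)
    (hg : HasSymbolBounds μ A w₂ k₂ N g) : HasSymbolBounds μ A (w₁ + w₂) (k₁ + k₂) N (f * g) := by
  have base : ∀ {w₁ w₂ f g}, HasSymbolBounds μ A w₁ k₁ 0 f → HasSymbolBounds μ A w₂ k₂ 0 g →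
      HasSymbolBounds μ A (w₁ + w₂) (k₁ + k₂) 0 (f * g) := by
    intro w₁ w₂ f g hf hg
    rw [hasSymbolBounds_zero_iff] at *
    exact ⟨hf.1.mul hg.1, (hf.2.mul hg.2).congr_right (symbolWeight_mul hA _ _ _ _)⟩
  induction N generalizing w₁ w₂ f g with
  | zero => exact base hf hg
  | succ N ih =>
    rw [hasSymbolBounds_succ_iff] at *
    refine ⟨base hf.1 hg.1, fun o => ?_⟩
    rw [dirDeriv_mul hf.1.1 hg.1.1]
    have h₁ := ih (hf.2 o) ((hasSymbolBounds_succ_iff.2 hg).mono N.le_succ)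
    have h₂ := ih ((hasSymbolBounds_succ_iff.2 hf).mono N.le_succ) (hg.2 o)
    rw [add_right_comm] at h₁
    rw [← add_assoc] at h₂
    exact h₁.add h₂

theorem hasSymbolBounds_inv (hA0 : ∀ p, A p ≠ 0) (hA : ∀ N, HasSymbolBounds μ A 0 1 N A)
    (N : ℕ) : HasSymbolBounds μ A 0 (-1) N A⁻¹ := by
  have base : HasSymbolBounds μ A 0 (-1) 0 A⁻¹ := by
    refine hasSymbolBounds_zero_iff.2 ⟨(hA 0).1.inv hA0, isBigO_of_le ⊤ fun p => ?_⟩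
    simp [symbolWeight]
  induction N with
  | zero => exact base
  | succ N ih =>
    refine hasSymbolBounds_succ_iff.2 ⟨base, fun o => ?_⟩
    rw [dirDeriv_inv (hA 0).1 hA0]
    have := ((ih.mul hA0 ih).mul hA0 ((hasSymbolBounds_succ_iff.1 (hA (N + 1))).2 o)).neg
    simpa using this

theorem symbolWeight_isBigO_of_elliptic {C₀ m' : ℝ} (hC₀ : 0 < C₀)
    (hell : ∀ p, C₀ * jb p.2 ^ m' ≤ ‖A p‖) (w : ℝ) :
    symbolWeight A w (-1) =O[⊤] symbolWeight A (w - m') 0 := by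
  refine isBigO_of_le' (c := C₀⁻¹) ⊤ fun p => ?_
  rw [norm_symbolWeight, norm_symbolWeight, symbolWeight, symbolWeight, zpow_neg_one, zpow_zero,
    Real.rpow_sub (jb_pos p.2)]
  calc jb p.2 ^ w * ‖A p‖⁻¹ ≤ jb p.2 ^ w * (C₀ * jb p.2 ^ m')⁻¹ := by
        have := jb_pos p.2
        gcongr
        exact hell p
    _ = C₀⁻¹ * (jb p.2 ^ w / jb p.2 ^ m' * 1) := by ring

theorem HasSymbolBounds.of_elliptic {C₀ m' : ℝ} (hC₀ : 0 < C₀)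
    (hell : ∀ p, C₀ * jb p.2 ^ m' ≤ ‖A p‖) (hg : HasSymbolBounds μ A w (-1) N g) :
    HasSymbolBounds μ A (w - m') 0 N g := by
  refine ⟨hg.1, fun u hu => ?_⟩
  rw [sub_add_eq_add_sub]
  exact (hg.2 u hu).trans (symbolWeight_isBigO_of_elliptic hC₀ hell _)

theorem hasSymbolBounds_of_pdX_pdXi {a : ℝⁿ → ℝⁿ → ℂ}
    (ha : ContDiff ℝ ∞ fun p : ℝⁿ × ℝⁿ => a p.1 p.2)
    (hder : ∀ α β : Fin n → ℕ, ∃ C > 0, ∀ x ξ, ‖pdX β (pdXi α a) x ξ‖ ≤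
      C * jb ξ ^ (-((∑ i, α i : ℕ) : ℝ) + μ * ((∑ i, β i : ℕ) : ℝ)) * ‖a x ξ‖) (N : ℕ) :
    HasSymbolBounds μ (fun p => a p.1 p.2) 0 1 N fun p => a p.1 p.2 := by
  refine ⟨ha, fun u _ => ?_⟩
  have hu := perm_mixedWord_count u
  obtain ⟨C, -, hC⟩ := hder (fun i => Multiset.count (Sum.inr i) (u : Multiset (Fin n ⊕ Fin n)))
    fun i => Multiset.count (Sum.inl i) (u : Multiset (Fin n ⊕ Fin n))
  rw [iteratedDirDeriv_perm ha (hu.map coordDir), (hu.map (coordOrder μ)).sum_eq,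
    sum_map_coordOrder_mixedWord, zero_add]
  refine isBigO_top.2 ⟨C, fun p => ?_⟩
  rw [norm_symbolWeight, symbolWeight, zpow_one, ← pdX_pdXi_eq_iteratedDirDeriv ha]
  exact (hC p.1 p.2).trans_eq (mul_assoc _ _ _)

def freqDilation (ε : ℝ) : ℝⁿ × ℝⁿ →L[ℝ] ℝⁿ × ℝⁿ :=
  (ContinuousLinearMap.id ℝ ℝⁿ).prodMap (ε • ContinuousLinearMap.id ℝ ℝⁿ)

theorem freqDilation_coordDir (ε : ℝ) (o : Fin n ⊕ Fin n) :
    freqDilation ε (coordDir o) = Sum.elim (fun _ => 1) (fun _ => ε) o • coordDir o := by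
  cases o <;> simp [freqDilation, coordDir]

theorem iteratedDirDeriv_mixedWord_comp_freqDilation (hg : ContDiff ℝ ∞ g)
    (ε : ℝ) (α β : Fin n → ℕ) :
    iteratedDirDeriv ((mixedWord α β).map coordDir) (g ∘ freqDilation ε) =
      fun p => (ε ^ ∑ i, α i) •
        iteratedDirDeriv ((mixedWord α β).map coordDir) g (freqDilation ε p) := by
  rw [iteratedDirDeriv_comp_of_hasFDerivAt hg fun _ => (freqDilation ε).hasFDerivAt, List.map_map,
    show freqDilation ε ∘ coordDir = fun o => Sum.elim (fun _ => 1) (fun _ => ε) o • coordDir o from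
      funext (freqDilation_coordDir ε), iteratedDirDeriv_map_smul hg, prod_map_mixedWord]
  funext p
  simp [Finset.prod_pow_eq_pow_sum]

theorem jb_smul_le {ε : ℝ} (hε : ε ∈ Set.Icc (0 : ℝ) 1) (ξ : ℝⁿ) : jb (ε • ξ) ≤ jb ξ := by
  refine Real.sqrt_le_sqrt ?_
  rw [norm_smul, Real.norm_of_nonneg hε.1, mul_pow]
  have : ε ^ 2 ≤ 1 := pow_le_one₀ hε.1 hε.2
  nlinarith [sq_nonneg ‖ξ‖]

theorem mul_jb_le_jb_smul {ε : ℝ} (hε : ε ∈ Set.Icc (0 : ℝ) 1) (ξ : ℝⁿ) :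
    ε * jb ξ ≤ jb (ε • ξ) := by
  rw [jb, jb, ← Real.sqrt_sq hε.1, ← Real.sqrt_mul (sq_nonneg ε)]
  refine Real.sqrt_le_sqrt ?_
  rw [Real.sqrt_sq hε.1, norm_smul, Real.norm_of_nonneg hε.1, mul_pow]
  have : ε ^ 2 ≤ 1 := pow_le_one₀ hε.1 hε.2
  nlinarith

theorem rpow_mul_jb_smul_rpow_neg_le {ε t : ℝ} (hε : ε ∈ Set.Ioc (0 : ℝ) 1) (ht : 0 ≤ t)
    (ξ : ℝⁿ) : ε ^ t * jb (ε • ξ) ^ (-t) ≤ jb ξ ^ (-t) := by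
  calc ε ^ t * jb (ε • ξ) ^ (-t) ≤ ε ^ t * (ε * jb ξ) ^ (-t) := by
        refine mul_le_mul_of_nonneg_left ?_ (Real.rpow_nonneg hε.1.le t)
        exact Real.rpow_le_rpow_of_nonpos (mul_pos hε.1 (jb_pos ξ))
          (mul_jb_le_jb_smul (Set.Ioc_subset_Icc_self hε) ξ) (neg_nonpos.2 ht)
    _ = jb ξ ^ (-t) := by
        rw [Real.mul_rpow hε.1.le (jb_pos ξ).le, ← mul_assoc, ← Real.rpow_add hε.1]
        simp

theorem rpow_mul_jb_smul_rpow_le {ε w a b : ℝ} (hε : ε ∈ Set.Ioc (0 : ℝ) 1) (hwa : w ≤ a)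
    (hb : 0 ≤ b) (ξ : ℝⁿ) : ε ^ a * jb (ε • ξ) ^ (w - a + b) ≤ ε ^ w * jb ξ ^ (w - a + b) := by
  have hjb := jb_pos ξ
  have hjbε := jb_pos (ε • ξ)
  rw [show a = w + (a - w) by ring, show w - (w + (a - w)) + b = -(a - w) + b by ring,
    Real.rpow_add hε.1, Real.rpow_add hjbε, Real.rpow_add hjb]
  calc ε ^ w * ε ^ (a - w) * (jb (ε • ξ) ^ (-(a - w)) * jb (ε • ξ) ^ b)
      = ε ^ w * (ε ^ (a - w) * jb (ε • ξ) ^ (-(a - w))) * jb (ε • ξ) ^ b := by ring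
    _ ≤ ε ^ w * jb ξ ^ (-(a - w)) * jb ξ ^ b := by
      have := hε.1
      gcongr
      · exact rpow_mul_jb_smul_rpow_neg_le hε (sub_nonneg.2 hwa) ξ
      · exact jb_smul_le (Set.Ioc_subset_Icc_self hε) ξ
    _ = ε ^ w * (jb ξ ^ (-(a - w)) * jb ξ ^ b) := by ring

theorem exists_norm_pdX_pdXi_rescaled_le (hμ : 0 ≤ μ)
    (hg : ∀ N, HasSymbolBounds μ A w 0 N g) (α β : Fin n → ℕ)
    (hw : w ≤ ((∑ i, α i : ℕ) : ℝ)) :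
    ∃ C > 0, ∀ ε ∈ Set.Ioc (0 : ℝ) 1, ∀ x ξ,
      ‖pdX β (pdXi α fun x' ξ' => g (x', ε • ξ')) x ξ‖ ≤
        C * ε ^ w * jb ξ ^ (w - ((∑ i, α i : ℕ) : ℝ) + μ * ((∑ i, β i : ℕ) : ℝ)) := by
  obtain ⟨C, hC, hCg⟩ := ((hg (mixedWord α β).length).2 _ le_rfl).exists_pos
  rw [isBigOWith_top, sum_map_coordOrder_mixedWord] at hCg
  refine ⟨C, hC, fun ε hε x ξ => ?_⟩
  have hgε : ContDiff ℝ ∞ (g ∘ freqDilation ε) := (hg 0).contDiff.comp (freqDilation ε).contDiff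
  rw [pdX_pdXi_eq_iteratedDirDeriv hgε,
    show (fun p : ℝⁿ × ℝⁿ => g (p.1, ε • p.2)) = g ∘ freqDilation ε from rfl,
    iteratedDirDeriv_mixedWord_comp_freqDilation (hg 0).contDiff]
  have hbound := hCg (x, ε • ξ)
  rw [norm_symbolWeight, symbolWeight, zpow_zero, mul_one, ← add_assoc, ← sub_eq_add_neg] at hbound
  rw [norm_smul, Real.norm_of_nonneg (pow_nonneg hε.1.le _), ← Real.rpow_natCast]
  calc ε ^ ((∑ i, α i : ℕ) : ℝ) * ‖iteratedDirDeriv _ g (x, ε • ξ)‖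
      ≤ ε ^ ((∑ i, α i : ℕ) : ℝ) * (C * jb (ε • ξ) ^
          (w - ((∑ i, α i : ℕ) : ℝ) + μ * ((∑ i, β i : ℕ) : ℝ))) := by
        exact mul_le_mul_of_nonneg_left hbound (by have := hε.1; positivity)
    _ = C * (ε ^ ((∑ i, α i : ℕ) : ℝ) * jb (ε • ξ) ^
          (w - ((∑ i, α i : ℕ) : ℝ) + μ * ((∑ i, β i : ℕ) : ℝ))) := by ring
    _ ≤ C * (ε ^ w * jb ξ ^ (w - ((∑ i, α i : ℕ) : ℝ) + μ * ((∑ i, β i : ℕ) : ℝ))) := by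
        exact mul_le_mul_of_nonneg_left (rpow_mul_jb_smul_rpow_le hε hw (by positivity) ξ) hC.le
    _ = _ := by ring

end PhaseSpace

/-- Smallness for rescaled reciprocal symbols: under ellipticity of order `m' ∈ [μ-1, 0)` and
relative derivative bounds for `a`, for all multi-indices `α ≠ 0`, `β` there is a constant
`C'` independent of `ε ∈ (0,1)` with
`|∂_x^β ∂_ξ^α (1/a_ε)(x,ξ)| ≤ C' ε^{-m'} ⟨ξ⟩^{-m'-|α|+μ|β|}`, where `a_ε(x,ξ) = a(x,εξ)`. -/
theorem stmt_17 {n : ℕ} (μ : ℝ) (hμ : μ ∈ Set.Ioo (0 : ℝ) 1)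
    (m' : ℝ) (hm' : m' ∈ Set.Ico (μ - 1) 0)
    (a : EuclideanSpace ℝ (Fin n) → EuclideanSpace ℝ (Fin n) → ℂ)
    (ha_smooth : ContDiff ℝ (⊤ : ℕ∞)
      (fun p : EuclideanSpace ℝ (Fin n) × EuclideanSpace ℝ (Fin n) => a p.1 p.2))
    (C₀ : ℝ) (hC₀ : 0 < C₀)
    (ha_ell : ∀ x ξ, C₀ * jb ξ ^ m' ≤ ‖a x ξ‖)
    (ha_der : ∀ α β : Fin n → ℕ, ∃ C > 0, ∀ x ξ,
      ‖pdX β (pdXi α a) x ξ‖ ≤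
        C * jb ξ ^ (-((∑ i, α i : ℕ) : ℝ) + μ * ((∑ i, β i : ℕ) : ℝ)) * ‖a x ξ‖) :
    ∀ α β : Fin n → ℕ, α ≠ 0 → ∃ C' > 0, ∀ ε ∈ Set.Ioo (0 : ℝ) 1, ∀ x ξ,
      ‖pdX β (pdXi α (fun x' ξ' => (a x' (ε • ξ'))⁻¹)) x ξ‖ ≤
        C' * ε ^ (-m') * jb ξ ^ (-m' - ((∑ i, α i : ℕ) : ℝ) + μ * ((∑ i, β i : ℕ) : ℝ)) := by
  intro α β hα
  have hA0 : ∀ x ξ, a x ξ ≠ 0 := fun x ξ =>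
    norm_pos_iff.1 ((mul_pos hC₀ (Real.rpow_pos_of_pos (jb_pos ξ) m')).trans_le (ha_ell x ξ))
  have hinv : ∀ N, HasSymbolBounds μ (fun p => a p.1 p.2) (-m') 0 N (fun p => a p.1 p.2)⁻¹ :=
    fun N => by
      simpa using (hasSymbolBounds_inv (fun p => hA0 p.1 p.2)
        (hasSymbolBounds_of_pdX_pdXi ha_smooth ha_der) N).of_elliptic hC₀ fun p => ha_ell p.1 p.2
  have hα1 : (1 : ℝ) ≤ (∑ i, α i : ℕ) := by
    exact_mod_cast Nat.one_le_iff_ne_zero.2 fun h =>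
      hα (funext fun i => Finset.sum_eq_zero_iff.1 h i (Finset.mem_univ i))
  obtain ⟨C, hC, hbound⟩ :=
    exists_norm_pdX_pdXi_rescaled_le hμ.1.le hinv α β (by linarith [hm'.1, hμ.1])
  exact ⟨C, hC, fun ε hε => hbound ε (Set.Ioo_subset_Ioc_self hε)⟩
end
end
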